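/- Under the specialization c̃_{ia} = c_{ia} if a ∈ {(0,0),(0,n),(m,0),(m,n)} and c̃_{ia} = 0 otherwise, the determinant satisfies det(F_{m,n}(c̃)) = ±Δ^{mn}, where Δ is the determinant of the 4×4 matrix whose i-th row is (c_{i,(0,0)}, c_{i,(m,0)}, c_{i,(0,n)}, c_{i,(m,n)}). -/
import Mathlib


open MvPolynomial

/-- Variables `c_{ia}` for `i = 1,…,4` and `a ∈ 𝒜 = {0,…,m} × {0,…,n}`. -/
abbrev MVar (m n : ℕ) : Type := Fin 4 × Fin (m + 1) × Fin (n + 1)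

/-- The coefficient of the monomial `x^b` in `F_i = ∑_{a ∈ 𝒜} c_{ia} x^a`:
it is the variable `c_{ib}` if `b ∈ 𝒜`, and `0` otherwise. -/
noncomputable def Fcoeff (R : Type) [CommRing R] (m n : ℕ) (i : Fin 4) (b : ℤ × ℤ) :
    MvPolynomial (MVar m n) R :=
  if h : 0 ≤ b.1 ∧ b.1 ≤ (m : ℤ) ∧ 0 ≤ b.2 ∧ b.2 ≤ (n : ℤ) then
    X (i, ⟨b.1.toNat, by omega⟩, ⟨b.2.toNat, by omega⟩)
  else 0

/-- The determinant of the `4mn × 4mn` matrix `F_{m,n}` of the map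
`(S_{m-1,n-1})⁴ → S_{2m-1,2n-1}`, `(A₁,…,A₄) ↦ ∑ Aᵢ Fᵢ`, in the monomial bases:
the row indexed by `x^a Fᵢ` (with `a ∈ {0,…,m-1} × {0,…,n-1}`) has, in the column
of the monomial `x^b` (with `b ∈ {0,…,2m-1} × {0,…,2n-1}`), the entry `c_{i,b-a}`
(or `0`).  The bijection `e` fixes an identification of rows and columns, which
only affects the determinant by a sign. -/
noncomputable def Fdet (R : Type) [CommRing R] (m n : ℕ)
    (e : Fin (2 * m) × Fin (2 * n) ≃ Fin 4 × Fin m × Fin n) :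
    MvPolynomial (MVar m n) R :=
  Matrix.det (Matrix.of fun r c =>
    Fcoeff R m n (e r).1 ((c.1 : ℤ) - (((e r).2.1 : ℕ) : ℤ), (c.2 : ℤ) - (((e r).2.2 : ℕ) : ℤ)))


/-- The determinant `Δ` of the 4×4 matrix whose `i`-th row is
`(c_{i,(0,0)}, c_{i,(m,0)}, c_{i,(0,n)}, c_{i,(m,n)})`. -/
noncomputable def cornerDet (R : Type) [CommRing R] (m n : ℕ) : MvPolynomial (MVar m n) R :=
  Matrix.det (Matrix.of fun (i j : Fin 4) =>
    X (i, ![((0 : Fin (m + 1)), (0 : Fin (n + 1))), (Fin.last m, 0), (0, Fin.last n),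
            (Fin.last m, Fin.last n)] j))

/-- The specialization `c̃`: it keeps `c_{ia}` for `a ∈ {(0,0),(0,n),(m,0),(m,n)}`
and sends all the other variables to `0`. -/
noncomputable def cornerSpec (m n : ℕ) :
    MvPolynomial (MVar m n) ℤ →ₐ[ℤ] MvPolynomial (MVar m n) ℤ :=
  aeval (fun v => if (v.2.1 = 0 ∨ v.2.1 = Fin.last m) ∧ (v.2.2 = 0 ∨ v.2.2 = Fin.last n)
    then X v else 0)

noncomputable def cornerMat (m n : ℕ) : Matrix (Fin 4) (Fin 4) (MvPolynomial (MVar m n) ℤ) :=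
  Matrix.of fun (i j : Fin 4) =>
    X (i, ![((0 : Fin (m + 1)), (0 : Fin (n + 1))), (Fin.last m, 0), (0, Fin.last n),
            (Fin.last m, Fin.last n)] j)

def e4 : Fin 2 × Fin 2 ≃ Fin 4 where
  toFun p := ⟨p.1.1 + 2 * p.2.1, by have := p.1.isLt; have := p.2.isLt; omega⟩
  invFun j := (⟨j.1 % 2, by omega⟩, ⟨j.1 / 2, by have := j.isLt; omega⟩)
  left_inv := by decide
  right_inv := by decide

def qdiv (k : ℕ) (hk : 0 < k) : Fin (2 * k) ≃ Fin 2 × Fin k where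
  toFun b := (⟨b.1 / k, (Nat.div_lt_iff_lt_mul hk).2 (by have := b.isLt; omega)⟩,
    ⟨b.1 % k, Nat.mod_lt _ hk⟩)
  invFun p := ⟨p.1.1 * k + p.2.1, by
    have h1 : p.1.1 ≤ 1 := by have := p.1.isLt; omega
    have := Nat.mul_le_mul_right k h1
    have := p.2.isLt; omega⟩
  left_inv b := Fin.ext (by show b.1 / k * k + b.1 % k = b.1; rw [mul_comm]; exact Nat.div_add_mod b.1 k)
  right_inv p := by
    have h2 := p.2.isLt
    have hdiv : (p.1.1 * k + p.2.1) / k = p.1.1 := by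
      rw [mul_comm, Nat.mul_add_div hk, Nat.div_eq_of_lt h2, Nat.add_zero]
    have hmod : (p.1.1 * k + p.2.1) % k = p.2.1 := by
      rw [mul_comm, Nat.mul_add_mod, Nat.mod_eq_of_lt h2]
    exact Prod.ext (Fin.ext hdiv) (Fin.ext hmod)

def colEquiv (m n : ℕ) (hm : 0 < m) (hn : 0 < n) :
    Fin (2 * m) × Fin (2 * n) ≃ Fin 4 × (Fin m × Fin n) :=
  ((qdiv m hm).prodCongr (qdiv n hn)).trans
    ((Equiv.prodProdProdComm (Fin 2) (Fin m) (Fin 2) (Fin n)).trans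
      (e4.prodCongr (Equiv.refl (Fin m × Fin n))))

lemma colEquiv_apply (m n : ℕ) (hm : 0 < m) (hn : 0 < n) (c : Fin (2 * m) × Fin (2 * n)) :
    colEquiv m n hm hn c =
      (e4 (⟨c.1.1 / m, (Nat.div_lt_iff_lt_mul hm).2 (by have := c.1.isLt; omega)⟩, ⟨c.2.1 / n, (Nat.div_lt_iff_lt_mul hn).2 (by have := c.2.isLt; omega)⟩),
        (⟨c.1.1 % m, Nat.mod_lt _ hm⟩, ⟨c.2.1 % n, Nat.mod_lt _ hn⟩)) := rfl

lemma spec_X (m n : ℕ) (v : MVar m n) : cornerSpec m n (X v) =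
    if (v.2.1 = 0 ∨ v.2.1 = Fin.last m) ∧ (v.2.2 = 0 ∨ v.2.2 = Fin.last n) then X v else 0 :=
  aeval_X _ v

lemma entry_eq (m n : ℕ) (hm : 0 < m) (hn : 0 < n) (i : Fin 4) (a1 : Fin m) (a2 : Fin n)
    (c1 : ℕ) (c2 : ℕ) (hc1 : c1 < 2 * m) (hc2 : c2 < 2 * n)
    (j1 j2 r1 r2 : ℕ) (hj1 : j1 = c1 / m) (hj2 : j2 = c2 / n)
    (hr1 : r1 = c1 % m) (hr2 : r2 = c2 % n)
    (bj1 : j1 < 2) (bj2 : j2 < 2) (bj : j1 + 2 * j2 < 4) (br1 : r1 < m) (br2 : r2 < n) :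
    cornerSpec m n (Fcoeff ℤ m n i ((c1 : ℤ) - (a1.1 : ℤ), (c2 : ℤ) - (a2.1 : ℤ))) =
    (if ((a1, a2) : Fin m × Fin n) = (⟨r1, br1⟩, ⟨r2, br2⟩) then
      cornerMat m n i (⟨j1 + 2 * j2, bj⟩) else 0) := by
  have ha1 := a1.isLt
  have ha2 := a2.isLt
  have hd1 : m * j1 + r1 = c1 := by rw [hj1, hr1]; exact Nat.div_add_mod c1 m
  have hd2 : n * j2 + r2 = c2 := by rw [hj2, hr2]; exact Nat.div_add_mod c2 n
  clear hr1 hr2 hc1 hc2 hj1 hj2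
  rcases (by omega : j1 = 0 ∨ j1 = 1) with rfl | rfl <;>
    rcases (by omega : j2 = 0 ∨ j2 = 1) with rfl | rfl <;>
    by_cases h : a1.1 = r1 ∧ a2.1 = r2
  · -- (0,0) pos
    obtain ⟨h1, h2⟩ := h
    rw [if_pos (Prod.ext (Fin.ext h1) (Fin.ext h2))]
    simp only [Fcoeff, apply_dite (cornerSpec m n), map_zero, spec_X]
    rw [dif_pos ⟨by omega, by omega, by omega, by omega⟩]
    rw [if_pos ⟨Or.inl (Fin.ext (by simp only [Fin.val_mk, Fin.val_zero, Fin.val_last]; omega)),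
      Or.inl (Fin.ext (by simp only [Fin.val_mk, Fin.val_zero, Fin.val_last]; omega))⟩]
    show _ = X (i, ((0 : Fin (m+1)), (0 : Fin (n+1))))
    exact congrArg X (Prod.ext rfl (Prod.ext
      (Fin.ext (by simp only [Fin.val_mk, Fin.val_zero, Fin.val_last]; omega))
      (Fin.ext (by simp only [Fin.val_mk, Fin.val_zero, Fin.val_last]; omega))))
  · rw [if_neg (fun heq => h ⟨congrArg Fin.val (congrArg Prod.fst heq),
      congrArg Fin.val (congrArg Prod.snd heq)⟩)]
    simp only [Fcoeff, apply_dite (cornerSpec m n), map_zero, spec_X]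
    split_ifs with hb hs
    · exfalso
      obtain ⟨hs1, hs2⟩ := hs
      apply h
      constructor
      · rcases hs1 with u | u
        all_goals
          have hv := congrArg Fin.val u
          simp only [Fin.val_mk, Fin.val_zero, Fin.val_last] at hv
          omega
      · rcases hs2 with u | u
        all_goals
          have hv := congrArg Fin.val u
          simp only [Fin.val_mk, Fin.val_zero, Fin.val_last] at hv
          omega
    · rfl
    · rfl
  · -- (0,1) pos
    obtain ⟨h1, h2⟩ := h
    rw [if_pos (Prod.ext (Fin.ext h1) (Fin.ext h2))]
    simp only [Fcoeff, apply_dite (cornerSpec m n), map_zero, spec_X]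
    rw [dif_pos ⟨by omega, by omega, by omega, by omega⟩]
    rw [if_pos ⟨Or.inl (Fin.ext (by simp only [Fin.val_mk, Fin.val_zero, Fin.val_last]; omega)),
      Or.inr (Fin.ext (by simp only [Fin.val_mk, Fin.val_zero, Fin.val_last]; omega))⟩]
    show _ = X (i, ((0 : Fin (m+1)), Fin.last n))
    exact congrArg X (Prod.ext rfl (Prod.ext
      (Fin.ext (by simp only [Fin.val_mk, Fin.val_zero, Fin.val_last]; omega))
      (Fin.ext (by simp only [Fin.val_mk, Fin.val_zero, Fin.val_last]; omega))))
  · rw [if_neg (fun heq => h ⟨congrArg Fin.val (congrArg Prod.fst heq),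
      congrArg Fin.val (congrArg Prod.snd heq)⟩)]
    simp only [Fcoeff, apply_dite (cornerSpec m n), map_zero, spec_X]
    split_ifs with hb hs
    · exfalso
      obtain ⟨hs1, hs2⟩ := hs
      apply h
      constructor
      · rcases hs1 with u | u
        all_goals
          have hv := congrArg Fin.val u
          simp only [Fin.val_mk, Fin.val_zero, Fin.val_last] at hv
          omega
      · rcases hs2 with u | u
        all_goals
          have hv := congrArg Fin.val u
          simp only [Fin.val_mk, Fin.val_zero, Fin.val_last] at hv
          omega
    · rfl
    · rfl
  · -- (1,0) pos
    obtain ⟨h1, h2⟩ := h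
    rw [if_pos (Prod.ext (Fin.ext h1) (Fin.ext h2))]
    simp only [Fcoeff, apply_dite (cornerSpec m n), map_zero, spec_X]
    rw [dif_pos ⟨by omega, by omega, by omega, by omega⟩]
    rw [if_pos ⟨Or.inr (Fin.ext (by simp only [Fin.val_mk, Fin.val_zero, Fin.val_last]; omega)),
      Or.inl (Fin.ext (by simp only [Fin.val_mk, Fin.val_zero, Fin.val_last]; omega))⟩]
    show _ = X (i, (Fin.last m, (0 : Fin (n+1))))
    exact congrArg X (Prod.ext rfl (Prod.ext
      (Fin.ext (by simp only [Fin.val_mk, Fin.val_zero, Fin.val_last]; omega))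
      (Fin.ext (by simp only [Fin.val_mk, Fin.val_zero, Fin.val_last]; omega))))
  · rw [if_neg (fun heq => h ⟨congrArg Fin.val (congrArg Prod.fst heq),
      congrArg Fin.val (congrArg Prod.snd heq)⟩)]
    simp only [Fcoeff, apply_dite (cornerSpec m n), map_zero, spec_X]
    split_ifs with hb hs
    · exfalso
      obtain ⟨hs1, hs2⟩ := hs
      apply h
      constructor
      · rcases hs1 with u | u
        all_goals
          have hv := congrArg Fin.val u
          simp only [Fin.val_mk, Fin.val_zero, Fin.val_last] at hv
          omega
      · rcases hs2 with u | u
        all_goals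
          have hv := congrArg Fin.val u
          simp only [Fin.val_mk, Fin.val_zero, Fin.val_last] at hv
          omega
    · rfl
    · rfl
  · -- (1,1) pos
    obtain ⟨h1, h2⟩ := h
    rw [if_pos (Prod.ext (Fin.ext h1) (Fin.ext h2))]
    simp only [Fcoeff, apply_dite (cornerSpec m n), map_zero, spec_X]
    rw [dif_pos ⟨by omega, by omega, by omega, by omega⟩]
    rw [if_pos ⟨Or.inr (Fin.ext (by simp only [Fin.val_mk, Fin.val_zero, Fin.val_last]; omega)),
      Or.inr (Fin.ext (by simp only [Fin.val_mk, Fin.val_zero, Fin.val_last]; omega))⟩]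
    show _ = X (i, (Fin.last m, Fin.last n))
    exact congrArg X (Prod.ext rfl (Prod.ext
      (Fin.ext (by simp only [Fin.val_mk, Fin.val_zero, Fin.val_last]; omega))
      (Fin.ext (by simp only [Fin.val_mk, Fin.val_zero, Fin.val_last]; omega))))
  · rw [if_neg (fun heq => h ⟨congrArg Fin.val (congrArg Prod.fst heq),
      congrArg Fin.val (congrArg Prod.snd heq)⟩)]
    simp only [Fcoeff, apply_dite (cornerSpec m n), map_zero, spec_X]
    split_ifs with hb hs
    · exfalso
      obtain ⟨hs1, hs2⟩ := hs
      apply h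
      constructor
      · rcases hs1 with u | u
        all_goals
          have hv := congrArg Fin.val u
          simp only [Fin.val_mk, Fin.val_zero, Fin.val_last] at hv
          omega
      · rcases hs2 with u | u
        all_goals
          have hv := congrArg Fin.val u
          simp only [Fin.val_mk, Fin.val_zero, Fin.val_last] at hv
          omega
    · rfl
    · rfl

lemma cornerMat_det (m n : ℕ) : (cornerMat m n).det = cornerDet ℤ m n := rfl

/-- under the corner specialization, `det(F_{m,n}(c̃)) = ± Δ^{mn}`. -/
theorem det_movingPlanes_cornerSpec (m n : ℕ) (hm : 1 ≤ m) (hn : 1 ≤ n)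
    (e : Fin (2 * m) × Fin (2 * n) ≃ Fin 4 × Fin m × Fin n) :
    cornerSpec m n (Fdet ℤ m n e) = cornerDet ℤ m n ^ (m * n) ∨
    cornerSpec m n (Fdet ℤ m n e) = -(cornerDet ℤ m n ^ (m * n)) := by
  have hm' : 0 < m := hm
  have hn' : 0 < n := hn
  set κ := colEquiv m n hm' hn' with hκ
  set B : Matrix (Fin 4 × Fin m × Fin n) (Fin 4 × Fin m × Fin n) (MvPolynomial (MVar m n) ℤ) :=
    Matrix.blockDiagonal (fun _ : Fin m × Fin n => cornerMat m n) with hB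
  have h1 : cornerSpec m n (Fdet ℤ m n e) = (B.submatrix e κ).det := by
    rw [Fdet, AlgHom.map_det]
    congr 1
    refine Matrix.ext fun r c => ?_
    rcases hp : e r with ⟨i, a1, a2⟩
    have bj1 : c.1.1 / m < 2 := (Nat.div_lt_iff_lt_mul hm').2 (by have := c.1.isLt; omega)
    have bj2 : c.2.1 / n < 2 := (Nat.div_lt_iff_lt_mul hn').2 (by have := c.2.isLt; omega)
    show cornerSpec m n (Fcoeff ℤ m n (e r).1
        ((c.1 : ℤ) - (((e r).2.1 : ℕ) : ℤ), (c.2 : ℤ) - (((e r).2.2 : ℕ) : ℤ))) = B (e r) (κ c)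
    rw [hp, hκ, colEquiv_apply, hB, Matrix.blockDiagonal_apply]
    exact entry_eq m n hm' hn' i a1 a2 c.1.1 c.2.1 c.1.isLt c.2.isLt
      (c.1.1 / m) (c.2.1 / n) (c.1.1 % m) (c.2.1 % n) rfl rfl rfl rfl
      bj1 bj2 (by omega) (Nat.mod_lt _ hm') (Nat.mod_lt _ hn')
  set σ : Equiv.Perm (Fin (2 * m) × Fin (2 * n)) := e.trans κ.symm with hσ
  have h2 : B.submatrix e κ = (B.submatrix κ κ).submatrix σ id := by
    ext r c
    simp [hσ, Matrix.submatrix_apply, Equiv.apply_symm_apply]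
  have h3 : (B.submatrix κ κ).det = cornerDet ℤ m n ^ (m * n) := by
    rw [Matrix.det_submatrix_equiv_self, hB, Matrix.det_blockDiagonal]
    simp [cornerMat_det, Finset.prod_const, Finset.card_univ]
  rw [h1, h2, Matrix.det_permute, h3]
  rcases Int.units_eq_one_or (Equiv.Perm.sign σ) with hs | hs <;> rw [hs]
  · left; simp
  · right; simp
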